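/- arXiv:math/0008131 — 2 statements merged into one kernel-verified Lean document; each statement's English description precedes it below -/
import Mathlib

section
/- Let R be a commutative ring, let (A_n, φ_n)_{n∈ℕ} be an inverse system of R-modules, and let B_n ⊆ A_n be submodules with φ_n(B_{n+1}) ⊆ B_n. Assume that for every n the map A_{n+1}/B_{n+1} → A_n/B_n induced by φ_n is an isomorphism and that the restriction of φ_n to B_{n+1} is the zero map B_{n+1} → B_n. Then lim¹ A_n = 0, and for every fixed n₀ the composite lim A_n → A_{n₀} → A_{n₀}/B_{n₀} (projection to the n₀-th component followed by the quotient map) is an isomorphism of R-modules. -/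
open LinearMap Submodule

/-- The map `F : ∏ₙ Vₙ → ∏ₙ Vₙ`, `F(v)ₖ = vₖ − φₖ(v_{k+1})`, associated to an inverse
system of `R`-modules `(Vₙ, φₙ)`.  Its kernel is `lim Vₙ` and its cokernel is `lim¹ Vₙ`. -/
def limF (R : Type*) [CommRing R] (V : ℕ → Type*) [∀ n, AddCommGroup (V n)]
    [∀ n, Module R (V n)] (φ : ∀ n, V (n + 1) →ₗ[R] V n) :
    (∀ n, V n) →ₗ[R] (∀ n, V n) where
  toFun v := fun k => v k - φ k (v (k + 1))
  map_add' v w := by funext k; simp only [Pi.add_apply, map_add]; abel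
  map_smul' c v := by funext k; simp [smul_sub]

/-- If the transition maps of an inverse system `(Aₙ, φₙ)` of `R`-modules kill the
submodules `Bₙ ⊆ Aₙ` (`φₙ(B_{n+1}) = 0`, in particular `φₙ(B_{n+1}) ⊆ Bₙ`) and induce
isomorphisms `A_{n+1}/B_{n+1} ≅ Aₙ/Bₙ`, then `lim¹ Aₙ = 0` (i.e. `F` is surjective) and,
for every `n₀`, projecting `lim Aₙ ⊆ ∏ Aₙ` to the `n₀`-th component followed by the
quotient map `A_{n₀} → A_{n₀}/B_{n₀}` is an isomorphism of `R`-modules. -/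
theorem lim_of_eventually_constant (R : Type*) [CommRing R] (A : ℕ → Type*)
    [∀ n, AddCommGroup (A n)] [∀ n, Module R (A n)] (φ : ∀ n, A (n + 1) →ₗ[R] A n)
    (B : ∀ n, Submodule R (A n))
    (hzero : ∀ n, ∀ x ∈ B (n + 1), φ n x = 0)
    (hiso : ∀ n, Function.Bijective
      (Submodule.mapQ (B (n + 1)) (B n) (φ n)
        (fun x hx => Submodule.mem_comap.mpr (by rw [hzero n x hx]; exact (B n).zero_mem)))) :
    Function.Surjective (limF R A φ) ∧
      ∀ n₀ : ℕ, Function.Bijective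
        ((B n₀).mkQ.comp ((LinearMap.proj n₀).comp (ker (limF R A φ)).subtype)) := by

  classical
  let e : ∀ n, (A (n+1) ⧸ B (n+1)) ≃ₗ[R] (A n ⧸ B n) :=
    fun n => LinearEquiv.ofBijective _ (hiso n)
  let E : ∀ n, (A n ⧸ B n) ≃ₗ[R] (A 0 ⧸ B 0) :=
    fun n => Nat.rec (LinearEquiv.refl R _) (fun k Ek => (e k).trans Ek) n
  have hE : ∀ k (x : A (k+1) ⧸ B (k+1)), E (k+1) x = E k (e k x) := fun k x => rfl
  let ψ : ∀ n, (A (n+1) ⧸ B (n+1)) →ₗ[R] A n :=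
    fun n => (B (n+1)).liftQ (φ n)
      (fun x hx => by simp [LinearMap.mem_ker, hzero n x hx])
  have hψ : ∀ n (x : A (n+1)), ψ n ((B (n+1)).mkQ x) = φ n x := by
    intro n x
    simp [ψ, Submodule.liftQ_apply]
  have hψe : ∀ n (y : A (n+1) ⧸ B (n+1)), (B n).mkQ (ψ n y) = e n y := by
    intro n y
    obtain ⟨x, rfl⟩ := Submodule.Quotient.mk_surjective _ y
    have h1 : ((B (n+1)).mkQ x : A (n+1) ⧸ B (n+1)) = Submodule.Quotient.mk x := rfl
    rw [← h1, hψ]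
    simp [e, Submodule.mapQ_apply]
  have kerF : ∀ v : ∀ n, A n, v ∈ ker (limF R A φ) ↔ ∀ k, v k = φ k (v (k+1)) := by
    intro v
    rw [LinearMap.mem_ker]
    constructor
    · intro h k
      have := congrFun h k
      simpa [limF, sub_eq_zero] using this
    · intro h
      funext k
      show v k - φ k (v (k+1)) = 0
      rw [sub_eq_zero]
      exact h k
  constructor
  · intro w
    let u : ℕ → (A 0 ⧸ B 0) :=
      fun n => Nat.rec 0 (fun k uk => uk - E k ((B k).mkQ (w k))) n
    have hu : ∀ k, u (k+1) = u k - E k ((B k).mkQ (w k)) := fun k => rfl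
    let cb : ∀ k, A k ⧸ B k := fun k => (E k).symm (u k)
    let v : ∀ k, A k := fun k => w k + ψ k (cb (k+1))
    have hv : ∀ k, (B k).mkQ (v k) = cb k := by
      intro k
      apply (E k).injective
      have h1 : (E k) ((B k).mkQ (v k))
          = E k ((B k).mkQ (w k)) + E (k+1) (cb (k+1)) := by
        simp only [v, map_add, hψe, hE]
      rw [h1]
      have h2 : E (k+1) (cb (k+1)) = u (k+1) := (E (k+1)).apply_symm_apply _
      have h3 : E k (cb k) = u k := (E k).apply_symm_apply _
      rw [h2, h3, hu]
      abel
    refine ⟨v, ?_⟩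
    funext k
    show v k - φ k (v (k+1)) = w k
    have h4 : φ k (v (k+1)) = ψ k ((B (k+1)).mkQ (v (k+1))) := (hψ k _).symm
    rw [h4, hv (k+1)]
    simp [v]
  · intro n₀
    constructor
    · rw [injective_iff_map_eq_zero]
      rintro ⟨v, hv⟩ hx
      have hrec : ∀ k, v k = φ k (v (k+1)) := (kerF v).mp hv
      have hx' : (B n₀).mkQ (v n₀) = 0 := hx
      have ht : ∀ k, E (k+1) ((B (k+1)).mkQ (v (k+1))) = E k ((B k).mkQ (v k)) := by
        intro k
        rw [hE]
        congr 1
        rw [hrec k, ← hψ, hψe]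
      have hconst : ∀ k, E k ((B k).mkQ (v k)) = E 0 ((B 0).mkQ (v 0)) := by
        intro k
        induction k with
        | zero => rfl
        | succ k ih => rw [ht k, ih]
      have hall : ∀ k, (B k).mkQ (v k) = 0 := by
        intro k
        apply (E k).injective
        rw [hconst k, ← hconst n₀, hx']
        simp
      have hmem : ∀ k, v k ∈ B k := by
        intro k
        have := hall k
        rwa [Submodule.mkQ_apply, Submodule.Quotient.mk_eq_zero] at this
      apply Subtype.ext
      funext k
      show v k = 0
      rw [hrec k]
      exact hzero k _ (hmem (k+1))
    · intro c
      let cb : ∀ k, A k ⧸ B k := fun k => (E k).symm (E n₀ c)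
      let v : ∀ k, A k := fun k => ψ k (cb (k+1))
      have hv : ∀ k, (B k).mkQ (v k) = cb k := by
        intro k
        apply (E k).injective
        have h1 : (B k).mkQ (v k) = e k (cb (k+1)) := hψe k _
        rw [h1, ← hE]
        simp [cb]
      have hker : v ∈ ker (limF R A φ) := by
        rw [kerF]
        intro k
        rw [← hψ, hv (k+1)]
      refine ⟨⟨v, hker⟩, ?_⟩
      show (B n₀).mkQ (v n₀) = c
      rw [hv n₀]
      simp [cb]
end

section
/- Let f : ℝ → ℝ be a smooth (C^∞) function and let k ≥ 1 be an integer. Then there exists a smooth function G : ℝ → ℝ such that for every x > 0, x^{−k}·f(x) − (f^{(k−1)}(0)/(k−1)!)·x^{−1} equals the derivative at x of the function y ↦ y^{1−k}·G(y). Moreover the residue constant is unique: if c ∈ ℝ and a smooth G : ℝ → ℝ satisfy x^{−k} f(x) − c·x^{−1} = (d/dx)(x^{1−k} G(x)) for all x > 0, then c = f^{(k−1)}(0)/(k−1)!. -/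
open Filter Metric Set Topology

noncomputable def Dseq (f : ℝ → ℝ) : ℕ → (ℝ → ℝ)
  | 0 => f
  | (j+1) => dslope (Dseq f j) 0

lemma Dseq_shift (f : ℝ → ℝ) (m : ℕ) : Dseq (dslope f 0) m = Dseq f (m+1) := by
  induction m with
  | zero => rfl
  | succ m ih => show dslope (Dseq (dslope f 0) m) 0 = _; rw [ih]; rfl

lemma param_deriv (F : ℝ × ℝ → ℝ) (hF : ContDiff ℝ 1 F) (x₀ : ℝ) :
    HasDerivAt (fun x => ∫ t in (0:ℝ)..1, F (t, x))
      (∫ t in (0:ℝ)..1, fderiv ℝ F (t, x₀) (0, 1)) x₀ := by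
  have hFc : Continuous F := hF.continuous
  have hF'c : Continuous (fun p : ℝ × ℝ => fderiv ℝ F p (0, 1)) :=
    (hF.continuous_fderiv (by simp)).clm_apply continuous_const
  obtain ⟨C, hC⟩ := (isCompact_Icc.prod (isCompact_closedBall x₀ 1)).exists_bound_of_continuousOn
    hF'c.continuousOn
  have := intervalIntegral.hasDerivAt_integral_of_dominated_loc_of_deriv_le
    (μ := MeasureTheory.volume) (a := 0) (b := 1)
    (F := fun x t => F (t, x)) (F' := fun x t => fderiv ℝ F (t, x) (0, 1)) (x₀ := x₀)
    (s := closedBall x₀ 1) (bound := fun _ => C) (closedBall_mem_nhds x₀ one_pos)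
    (Eventually.of_forall fun x =>
      (hFc.comp (continuous_id.prodMk continuous_const)).aestronglyMeasurable)
    ((hFc.comp (continuous_id.prodMk continuous_const)).intervalIntegrable _ _)
    ((hF'c.comp (continuous_id.prodMk continuous_const)).aestronglyMeasurable)
    (Eventually.of_forall fun t ht x hx => by
      apply hC
      refine ⟨?_, hx⟩
      have := ht
      rw [Set.uIoc_of_le zero_le_one] at this
      exact ⟨this.1.le, this.2⟩)
    intervalIntegrable_const
    (Eventually.of_forall fun t _ x _ => by
      have h1 : HasDerivAt (fun x : ℝ => (t, x)) ((0:ℝ), (1:ℝ)) x :=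
        (hasDerivAt_const x t).prodMk (hasDerivAt_id x)
      exact ((hF.differentiable (by simp) (t, x)).hasFDerivAt.comp_hasDerivAt x h1))
  exact this.2

lemma param_smooth : ∀ n : ℕ, ∀ F : ℝ × ℝ → ℝ, ContDiff ℝ (⊤:ℕ∞) F →
    ContDiff ℝ n (fun x => ∫ t in (0:ℝ)..1, F (t, x)) := by
  intro n
  induction n with
  | zero =>
    intro F hF
    rw [Nat.cast_zero, contDiff_zero]
    exact continuous_iff_continuousAt.mpr fun x =>
      (param_deriv F (hF.of_le (by simp)) x).continuousAt
  | succ n ih =>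
    intro F hF
    have hd := fun x => param_deriv F (hF.of_le (by simp)) x
    rw [Nat.cast_add, Nat.cast_one, contDiff_succ_iff_deriv]
    refine ⟨fun x => (hd x).differentiableAt, by simp, ?_⟩
    rw [show deriv (fun x => ∫ t in (0:ℝ)..1, F (t, x))
      = fun x => ∫ t in (0:ℝ)..1, fderiv ℝ F (t, x) (0, 1) from funext fun x => (hd x).deriv]
    exact ih (fun p => fderiv ℝ F p (0, 1))
      ((hF.fderiv_right (m := (⊤:ℕ∞)) (by simp)).clm_apply contDiff_const)

lemma dslope_smooth {g : ℝ → ℝ} (hg : ContDiff ℝ (⊤:ℕ∞) g) :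
    ContDiff ℝ (⊤:ℕ∞) (dslope g 0) := by
  have hg' : ContDiff ℝ (⊤:ℕ∞) (deriv g) := (contDiff_infty_iff_deriv.mp hg).2
  have e : dslope g 0 = fun x => ∫ t in (0:ℝ)..1, deriv g (t * x) := by
    funext x
    by_cases hx : x = 0
    · subst hx; simp [dslope_same]
    · have hI : ∫ t in (0:ℝ)..1, deriv g (t * x) * x = g x - g 0 := by
        have := intervalIntegral.integral_eq_sub_of_hasDerivAt (a := 0) (b := 1)
          (f := fun t => g (t * x)) (f' := fun t => deriv g (t * x) * x)
          (fun t _ => by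
            have h2 := (hg.differentiable (by simp) (t * x)).hasDerivAt
            exact h2.comp t (hasDerivAt_mul_const x))
          ((by have := hg'.continuous; fun_prop :
            Continuous fun t => deriv g (t * x) * x).intervalIntegrable _ _)
        simpa using this
      rw [intervalIntegral.integral_mul_const] at hI
      have := sub_smul_dslope g 0 x
      simp only [sub_zero, smul_eq_mul] at this
      apply mul_left_cancel₀ hx
      rw [this, ← hI]; ring
  rw [e, contDiff_infty]
  intro n
  exact param_smooth n (fun p => deriv g (p.1 * p.2))
    (hg'.comp (contDiff_fst.mul contDiff_snd))

lemma Dseq_smooth {f : ℝ → ℝ} (hf : ContDiff ℝ (⊤:ℕ∞) f) (j : ℕ) :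
    ContDiff ℝ (⊤:ℕ∞) (Dseq f j) := by
  induction j with
  | zero => exact hf
  | succ j ih => exact dslope_smooth ih

lemma Dseq_decomp {f : ℝ → ℝ} (k : ℕ) (x : ℝ) :
    f x = (∑ j ∈ Finset.range k, Dseq f j 0 * x ^ j) + x ^ k * Dseq f k x := by
  induction k with
  | zero => simp [Dseq]
  | succ k ih =>
    rw [Finset.sum_range_succ]
    have h1 : Dseq f k x = Dseq f k 0 + x * Dseq f (k+1) x := by
      have := sub_smul_dslope (Dseq f k) 0 x
      simp only [sub_zero, smul_eq_mul] at this
      show Dseq f k x = Dseq f k 0 + x * dslope (Dseq f k) 0 x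
      linarith
    rw [ih, h1]
    ring

lemma iteratedDeriv_add' {n : ℕ} {f g : ℝ → ℝ} (hf : ContDiff ℝ (n:ℕ∞) f)
    (hg : ContDiff ℝ (n:ℕ∞) g) :
    iteratedDeriv n (fun x => f x + g x) = fun x => iteratedDeriv n f x + iteratedDeriv n g x := by
  funext x
  rw [← iteratedDerivWithin_univ, ← iteratedDerivWithin_univ, ← iteratedDerivWithin_univ]
  exact iteratedDerivWithin_add (mem_univ x) uniqueDiffOn_univ hf.contDiffAt.contDiffWithinAt hg.contDiffAt.contDiffWithinAt

lemma iteratedDeriv_const_add' {n : ℕ} (hn : 0 < n) (c : ℝ) (g : ℝ → ℝ) :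
    iteratedDeriv n (fun x => c + g x) = iteratedDeriv n g := by
  funext x
  rw [← iteratedDerivWithin_univ, ← iteratedDerivWithin_univ]
  exact iteratedDerivWithin_const_add hn c

/-- Leibniz for multiplication by `x`, evaluated at `0`. -/
lemma iteratedDeriv_id_mul (m : ℕ) (g : ℝ → ℝ) (hg : ContDiff ℝ (⊤:ℕ∞) g) :
    iteratedDeriv (m+1) (fun x => x * g x) 0 = (m+1) * iteratedDeriv m g 0 := by
  induction m generalizing g with
  | zero =>
    have hd : HasDerivAt (fun x : ℝ => x * g x) (1 * g 0 + 0 * deriv g 0) 0 :=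
      (hasDerivAt_id 0).mul (hg.differentiable (by simp) 0).hasDerivAt
    simp only [iteratedDeriv_succ, iteratedDeriv_zero]
    rw [hd.deriv]
    simp
  | succ m ih =>
    have hg' : ContDiff ℝ (⊤:ℕ∞) (deriv g) := (contDiff_infty_iff_deriv.mp hg).2
    have hder : deriv (fun x : ℝ => x * g x) = fun x => g x + x * deriv g x := by
      funext x
      have hd : HasDerivAt (fun x : ℝ => x * g x) (1 * g x + x * deriv g x) x :=
        (hasDerivAt_id x).mul (hg.differentiable (by simp) x).hasDerivAt
      rw [hd.deriv]; ring
    rw [iteratedDeriv_succ', hder]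
    have hadd := iteratedDeriv_add' (n := m+1) (f := g) (g := fun x => x * deriv g x)
      (hg.of_le (by exact_mod_cast le_top)) (by
        exact (contDiff_id.mul (hg'.of_le (by exact_mod_cast le_top))))
    rw [hadd]
    show iteratedDeriv (m+1) g 0 + iteratedDeriv (m+1) (fun x => x * deriv g x) 0 = _
    rw [ih (deriv g) hg', ← iteratedDeriv_succ']
    push_cast
    ring

lemma Dseq_coeff {f : ℝ → ℝ} (hf : ContDiff ℝ (⊤:ℕ∞) f) (m : ℕ) :
    iteratedDeriv m f 0 = m.factorial * Dseq f m 0 := by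
  induction m generalizing f with
  | zero => simp [Dseq]
  | succ m ih =>
    have hD1 : ContDiff ℝ (⊤:ℕ∞) (dslope f 0) := Dseq_smooth hf 1
    have hfeq : f = fun x => f 0 + x * dslope f 0 x := by
      funext x
      have := sub_smul_dslope f 0 x
      simp only [sub_zero, smul_eq_mul] at this
      linarith
    calc iteratedDeriv (m+1) f 0
        = iteratedDeriv (m+1) (fun x => f 0 + x * dslope f 0 x) 0 := by rw [← hfeq]
      _ = iteratedDeriv (m+1) (fun x => x * dslope f 0 x) 0 := by
          rw [iteratedDeriv_const_add' (Nat.succ_pos m)]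
      _ = (m+1) * iteratedDeriv m (dslope f 0) 0 := by
          exact iteratedDeriv_id_mul m _ hD1
      _ = (m+1) * (m.factorial * Dseq (dslope f 0) m 0) := by rw [ih hD1]
      _ = (m+1).factorial * Dseq f (m+1) 0 := by
          rw [Dseq_shift]
          push_cast [Nat.factorial_succ]
          ring


lemma prod_desc (n : ℕ) : ∏ i ∈ Finset.range n, ((n:ℝ) - i) = n.factorial := by
  induction n with
  | zero => simp
  | succ n ih =>
    rw [Finset.prod_range_succ']
    have e : ∀ i ∈ Finset.range n, (((n+1:ℕ):ℝ) - ((i+1:ℕ):ℝ)) = ((n:ℝ) - (i:ℝ)) := by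
      intro i _; push_cast; ring
    rw [Finset.prod_congr rfl e, ih]
    push_cast [Nat.factorial_succ]
    ring

lemma iter_smooth {E : ℝ → ℝ} (hE : ContDiff ℝ (⊤:ℕ∞) E) (j : ℕ) :
    ContDiff ℝ (⊤:ℕ∞) (iteratedDeriv j E) := by
  induction j with
  | zero => rwa [iteratedDeriv_zero]
  | succ j ih => rw [iteratedDeriv_succ]; exact (contDiff_infty_iff_deriv.mp ih).2

/-- For a smooth `f : ℝ → ℝ` and an integer `k ≥ 1`, the Laurent-type function
`x^{-k} f(x)` has a Laurent-type antiderivative `x^{1-k} G(x)` (with `G` smooth) exactly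
after subtracting its residue term `c/x`, where the residue is the `(k-1)`-st Taylor
coefficient `c = f^{(k-1)}(0)/(k-1)!`; moreover the residue constant `c` is unique. -/
theorem laurent_antiderivative_residue (f : ℝ → ℝ) (hf : ContDiff ℝ (⊤ : ℕ∞) f) (k : ℕ)
    (hk : 1 ≤ k) :
    (∃ G : ℝ → ℝ, ContDiff ℝ (⊤ : ℕ∞) G ∧ ∀ x > (0 : ℝ),
      HasDerivAt (fun y : ℝ => y ^ ((1 : ℤ) - (k : ℤ)) * G y)
        (x ^ (-(k : ℤ)) * f x -
          (iteratedDeriv (k - 1) f 0 / (Nat.factorial (k - 1) : ℝ)) * x⁻¹) x) ∧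
    ∀ (c : ℝ) (G : ℝ → ℝ), ContDiff ℝ (⊤ : ℕ∞) G →
      (∀ x > (0 : ℝ), HasDerivAt (fun y : ℝ => y ^ ((1 : ℤ) - (k : ℤ)) * G y)
        (x ^ (-(k : ℤ)) * f x - c * x⁻¹) x) →
      c = iteratedDeriv (k - 1) f 0 / (Nat.factorial (k - 1) : ℝ) := by
  have hfa : ContDiff ℝ (⊤:ℕ∞) f := hf
  obtain ⟨K, rfl⟩ : ∃ K, k = K + 1 := ⟨k - 1, (Nat.succ_pred_eq_of_pos hk).symm⟩
  set a : ℕ → ℝ := fun j => Dseq f j 0 with ha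
  have hr : iteratedDeriv (K + 1 - 1) f 0 / (Nat.factorial (K + 1 - 1) : ℝ) = a K := by
    rw [show K + 1 - 1 = K from rfl, Dseq_coeff hfa K]
    have : (K.factorial : ℝ) ≠ 0 := Nat.cast_ne_zero.mpr K.factorial_ne_zero
    field_simp
    rfl
  rw [hr]
  set h : ℝ → ℝ := fun x => Dseq f (K+1) x with hh
  have hha : ContDiff ℝ (⊤:ℕ∞) h := Dseq_smooth hfa (K+1)
  have hhc : Continuous h := hha.continuous
  set H : ℝ → ℝ := fun x => ∫ t in (0:ℝ)..x, h t with hHdef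
  have hHd : ∀ x, HasDerivAt H (h x) x := fun x =>
    (hhc.integral_hasStrictDerivAt 0 x).hasDerivAt
  have hHa : ContDiff ℝ (⊤:ℕ∞) H := contDiff_infty_iff_deriv.mpr
    ⟨fun x => (hHd x).differentiableAt, by
      rw [show deriv H = h from funext fun x => (hHd x).deriv]; exact hha⟩
  set G : ℝ → ℝ := fun y => (∑ j ∈ Finset.range K, a j / ((j:ℝ) - K) * y ^ j)
    + y ^ K * H y with hG
  have hGa : ContDiff ℝ (⊤:ℕ∞) G := by
    rw [hG]
    exact (ContDiff.sum fun j _ => contDiff_const.mul (contDiff_id.pow j)).add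
      ((contDiff_id.pow K).mul hHa)
  have hdecomp : ∀ x : ℝ, f x = (∑ j ∈ Finset.range (K+1), a j * x ^ j) + x ^ (K+1) * h x :=
    fun x => Dseq_decomp (K+1) x
  have hexist : ∀ x > (0:ℝ),
      HasDerivAt (fun y : ℝ => y ^ ((1 : ℤ) - ((K+1 : ℕ) : ℤ)) * G y)
        (x ^ (-((K+1:ℕ) : ℤ)) * f x - a K * x⁻¹) x := by
    intro x hx
    have hx0 : x ≠ 0 := ne_of_gt hx
    set Φ : ℝ → ℝ := fun y => (∑ j ∈ Finset.range K, a j / ((j:ℝ) - K) * y ^ ((j:ℤ) - K))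
      + H y with hΦ
    have hΦd : HasDerivAt Φ
        ((∑ j ∈ Finset.range K, a j * x ^ ((j:ℤ) - K - 1)) + h x) x := by
      apply HasDerivAt.add _ (hHd x)
      apply HasDerivAt.fun_sum
      intro j hj
      have h1 : HasDerivAt (fun y : ℝ => y ^ ((j:ℤ) - K))
          ((((j:ℤ) - K : ℤ):ℝ) * x ^ ((j:ℤ) - K - 1)) x :=
        hasDerivAt_zpow _ x (Or.inl hx0)
      have h2 := h1.const_mul (a j / ((j:ℝ) - K))
      refine h2.congr_deriv ?_
      have hjK : (j:ℝ) - K ≠ 0 := by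
        have hjk : j < K := Finset.mem_range.mp hj
        have : (j:ℝ) < K := by exact_mod_cast hjk
        linarith
      push_cast
      field_simp
    have hev : (fun y : ℝ => y ^ ((1 : ℤ) - ((K+1:ℕ) : ℤ)) * G y) =ᶠ[𝓝 x] Φ := by
      filter_upwards [isOpen_Ioi.eventually_mem hx] with y hy
      have hy0 : (y:ℝ) ≠ 0 := ne_of_gt hy
      have hexp : (1 : ℤ) - ((K+1:ℕ) : ℤ) = -(K:ℤ) := by push_cast; ring
      rw [hexp]
      show y ^ (-(K:ℤ)) * ((∑ j ∈ Finset.range K, a j / ((j:ℝ) - K) * y ^ j) + y ^ K * H y) = _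
      rw [mul_add, Finset.mul_sum]
      congr 1
      · apply Finset.sum_congr rfl
        intro j hj
        have e : y ^ (-(K:ℤ)) * y ^ (j:ℕ) = y ^ ((j:ℤ) - K) := by
          rw [← zpow_natCast y j, ← zpow_add₀ hy0]
          congr 1; ring
        calc y ^ (-(K:ℤ)) * (a j / ((j:ℝ) - K) * y ^ j)
            = a j / ((j:ℝ) - K) * (y ^ (-(K:ℤ)) * y ^ (j:ℕ)) := by ring
          _ = a j / ((j:ℝ) - K) * y ^ ((j:ℤ) - K) := by rw [e]
      · rw [← mul_assoc, ← zpow_natCast y K, ← zpow_add₀ hy0,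
          show -(K:ℤ) + (K:ℤ) = 0 from by ring, zpow_zero, one_mul]
    have hval : (∑ j ∈ Finset.range K, a j * x ^ ((j:ℤ) - K - 1)) + h x
        = x ^ (-((K+1:ℕ) : ℤ)) * f x - a K * x⁻¹ := by
      have e : ∀ j : ℕ, x ^ (-((K+1:ℕ):ℤ)) * x ^ (j:ℕ) = x ^ ((j:ℤ) - K - 1) := by
        intro j
        rw [← zpow_natCast x j, ← zpow_add₀ hx0]
        congr 1; push_cast; ring
      rw [hdecomp x, Finset.sum_range_succ]
      rw [mul_add, mul_add, Finset.mul_sum]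
      have e2 : x ^ (-((K+1:ℕ):ℤ)) * (x ^ (K+1) * h x) = h x := by
        rw [← mul_assoc, ← zpow_natCast x (K+1), ← zpow_add₀ hx0,
          show -((K+1:ℕ):ℤ) + ((K+1:ℕ):ℤ) = 0 from by ring, zpow_zero, one_mul]
      have e3 : x ^ (-((K+1:ℕ):ℤ)) * (a K * x ^ K) = a K * x⁻¹ := by
        rw [mul_comm (a K), ← mul_assoc, ← zpow_natCast x K, ← zpow_add₀ hx0]
        rw [show (-((K+1:ℕ):ℤ) + (K:ℤ)) = -1 by push_cast; ring, zpow_neg_one]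
        ring
      have e4 : ∀ j ∈ Finset.range K,
          x ^ (-((K+1:ℕ):ℤ)) * (a j * x ^ j) = a j * x ^ ((j:ℤ) - K - 1) := by
        intro j _
        calc x ^ (-((K+1:ℕ):ℤ)) * (a j * x ^ j)
            = a j * (x ^ (-((K+1:ℕ):ℤ)) * x ^ (j:ℕ)) := by ring
          _ = a j * x ^ ((j:ℤ) - K - 1) := by rw [e j]
      rw [Finset.sum_congr rfl e4, e2, e3]
      ring
    have := hΦd.congr_of_eventuallyEq hev
    rwa [hval] at this
  refine ⟨⟨G, hGa, hexist⟩, ?_⟩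
  -- uniqueness
  intro c G' hG' hGd'
  set E : ℝ → ℝ := fun y => G' y - G y with hE
  have hEinf : ContDiff ℝ (⊤:ℕ∞) E := by
    have h1 : ContDiff ℝ (⊤ : ℕ∞) G := hGa
    exact (hG'.sub h1).of_le (by simp)
  have hiterd : ∀ m x, HasDerivAt (iteratedDeriv m E) (iteratedDeriv (m+1) E x) x := by
    intro m x
    rw [iteratedDeriv_succ]
    exact (((iter_smooth hEinf m).differentiable (by simp)) x).hasDerivAt
  have U : ∀ m, m ≤ K → ∀ x > (0:ℝ),
      ((m:ℝ) - K) * iteratedDeriv m E x + x * iteratedDeriv (m+1) E x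
        = (a K - c) * (∏ i ∈ Finset.range m, ((K:ℝ) - i)) * x ^ (K - m) := by
    intro m
    induction m with
    | zero =>
      intro _ x hx
      have hx0 : x ≠ 0 := ne_of_gt hx
      have h1 : HasDerivAt (fun y : ℝ => y ^ ((1:ℤ) - ((K+1:ℕ):ℤ)) * E y)
          ((a K - c) * x⁻¹) x := by
        have h0 := (hGd' x hx).fun_sub (hexist x hx)
        have hfeq : (fun y : ℝ => y ^ ((1:ℤ)-((K+1:ℕ):ℤ)) * G' y
            - y ^ ((1:ℤ)-((K+1:ℕ):ℤ)) * G y)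
            = (fun y : ℝ => y ^ ((1:ℤ)-((K+1:ℕ):ℤ)) * E y) := by
          funext y
          rw [hE]
          ring
        rw [hfeq] at h0
        refine h0.congr_deriv ?_
        ring
      have h2 : HasDerivAt (fun y : ℝ => y ^ ((1:ℤ) - ((K+1:ℕ):ℤ)) * E y)
          (((((1:ℤ) - ((K+1:ℕ):ℤ)):ℤ):ℝ) * x ^ ((1:ℤ) - ((K+1:ℕ):ℤ) - 1) * E x
            + x ^ ((1:ℤ) - ((K+1:ℕ):ℤ)) * deriv E x) x :=
        (hasDerivAt_zpow _ x (Or.inl hx0)).mul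
          ((hEinf.differentiable (by simp)) x).hasDerivAt
      have h3 := h1.unique h2
      rw [show (1:ℤ) - ((K+1:ℕ):ℤ) - 1 = -((K:ℤ)+1) by push_cast; ring,
        show (1:ℤ) - ((K+1:ℕ):ℤ) = -(K:ℤ) by push_cast; ring] at h3
      rw [show (((-(K:ℤ)):ℤ):ℝ) = -(K:ℝ) by push_cast; ring] at h3
      have A1 : x ^ (-((K:ℤ)+1)) * x ^ ((K+1:ℕ)) = 1 := by
        rw [← zpow_natCast x (K+1), ← zpow_add₀ hx0,
          show -((K:ℤ)+1) + ((K+1:ℕ):ℤ) = 0 from by push_cast; ring, zpow_zero]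
      have A2 : x ^ (-(K:ℤ)) * x ^ ((K+1:ℕ)) = x := by
        rw [← zpow_natCast x (K+1), ← zpow_add₀ hx0]
        rw [show (-(K:ℤ) + ((K+1:ℕ):ℤ)) = 1 by push_cast; ring, zpow_one]
      have A3 : x⁻¹ * x ^ ((K+1:ℕ)) = x ^ K := by
        rw [pow_succ]
        field_simp
      simp only [iteratedDeriv_zero, iteratedDeriv_one, Finset.range_zero,
        Finset.prod_empty, mul_one, Nat.sub_zero]
      push_cast
      have hone : iteratedDeriv 1 E x = deriv E x := by rw [iteratedDeriv_one]
      linear_combination (-(x ^ (K+1))) * h3 + (a K - c) * A3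
        + (K:ℝ) * E x * A1 + (-(deriv E x)) * A2 + x * hone
    | succ m ih =>
      intro hm1 x hx
      have hm : m ≤ K := le_trans (Nat.le_succ m) hm1
      have hmlt : m < K := hm1
      have hA : HasDerivAt
          (fun x => ((m:ℝ) - K) * iteratedDeriv m E x + x * iteratedDeriv (m+1) E x)
          (((m:ℝ) - K) * iteratedDeriv (m+1) E x
            + (1 * iteratedDeriv (m+1) E x + x * iteratedDeriv (m+2) E x)) x :=
        ((hiterd m x).const_mul ((m:ℝ) - K)).add ((hasDerivAt_id x).mul (hiterd (m+1) x))
      have hB : HasDerivAt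
          (fun x : ℝ => (a K - c) * (∏ i ∈ Finset.range m, ((K:ℝ) - i)) * x ^ (K - m))
          ((a K - c) * (∏ i ∈ Finset.range m, ((K:ℝ) - i))
            * (((K - m : ℕ):ℝ) * x ^ (K - m - 1))) x :=
        (hasDerivAt_pow (K - m) x).const_mul _
      have hevAB : (fun x : ℝ => (a K - c) * (∏ i ∈ Finset.range m, ((K:ℝ) - i)) * x ^ (K - m))
          =ᶠ[𝓝 x] (fun x => ((m:ℝ) - K) * iteratedDeriv m E x + x * iteratedDeriv (m+1) E x) := by
        filter_upwards [isOpen_Ioi.eventually_mem hx] with y hy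
        exact (ih hm y hy).symm
      have key := (hA.congr_of_eventuallyEq hevAB).unique hB
      rw [Finset.prod_range_succ]
      have ecast : ((K - m : ℕ):ℝ) = (K:ℝ) - m := by
        rw [Nat.cast_sub hm]
      have eexp : K - m - 1 = K - (m+1) := by omega
      rw [ecast, eexp] at key
      push_cast
      push_cast at key
      linear_combination key
  have hfin : ∀ x > (0:ℝ), x * iteratedDeriv (K+1) E x = (a K - c) * (K.factorial : ℝ) := by
    intro x hx
    have := U K le_rfl x hx
    rw [Nat.sub_self, pow_zero, mul_one, sub_self, zero_mul, zero_add, prod_desc K] at this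
    exact this
  have hc : Continuous (iteratedDeriv (K+1) E) := (iter_smooth hEinf (K+1)).continuous
  have ht1 : Filter.Tendsto (fun x => x * iteratedDeriv (K+1) E x) (nhdsWithin 0 (Ioi 0))
      (nhds (0 * iteratedDeriv (K+1) E 0)) :=
    ((continuous_id.mul hc).tendsto 0).mono_left nhdsWithin_le_nhds
  have ht2 : Filter.Tendsto (fun x => x * iteratedDeriv (K+1) E x) (nhdsWithin 0 (Ioi 0))
      (nhds ((a K - c) * (K.factorial : ℝ))) := by
    apply Filter.Tendsto.congr' _ tendsto_const_nhds
    filter_upwards [self_mem_nhdsWithin] with x hx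
    exact (hfin x hx).symm
  have huniq := tendsto_nhds_unique ht1 ht2
  rw [zero_mul] at huniq
  have hKfac : (K.factorial : ℝ) ≠ 0 := Nat.cast_ne_zero.mpr K.factorial_ne_zero
  have hd0 : a K - c = 0 := by
    rcases mul_eq_zero.mp huniq.symm with hcase | hcase
    · exact hcase
    · exact absurd hcase hKfac
  linarith
end
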